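/- arXiv:1410.6097 — 3 statements merged into one kernel-verified Lean document; each statement's English description precedes it below -/
import Mathlib

section
/- Let A = (Q, A, ·, ∘) be an invertible Mealy automaton and S the semigroup generated by the enriched dual ∂A^− acting on (Q ∪ Q^{-1})^ω. If the orbit of a periodic point y^ω (y a finite word over Q ∪ Q^{-1}) under S is finite, then every point in this orbit is itself a periodic point z^ω with |z| a multiple of |y|. -/
/-- A Mealy automaton (transducer) with state set `Q` and alphabet `A`. -/
structure Mealy (Q A : Type*) where
  step : Q → A → Q
  out : Q → A → A

namespace Mealy

variable {Q A : Type*}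

/-- Action of a state on finite words over the alphabet. -/
def act (M : Mealy Q A) : Q → List A → List A
  | _, [] => []
  | q, a :: w => M.out q a :: act M (M.step q a) w

/-- Action of the formal inverse of a state on finite words. -/
noncomputable def actInv (M : Mealy Q A) [Nonempty A] : Q → List A → List A
  | _, [] => []
  | q, a :: w =>
    Function.invFun (M.out q) a ::
      actInv M (M.step q (Function.invFun (M.out q) a)) w

/-- Action of a word over `Q ∪ Q⁻¹` (letters `(q, true)` are positive, `(q, false)`
are formal inverses) on finite words over the alphabet. -/
noncomputable def evalW (M : Mealy Q A) [Nonempty A] : List (Q × Bool) → List A → List A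
  | [], v => v
  | (q, true) :: w, v => act M q (evalW M w v)
  | (q, false) :: w, v => actInv M q (evalW M w v)

/-- Invertibility: every output function is a permutation of the alphabet. -/
def IsInvertible (M : Mealy Q A) : Prop := ∀ q, Function.Bijective (M.out q)

/-- Reversibility: every letter acts as a permutation of the states. -/
def IsReversible (M : Mealy Q A) : Prop := ∀ a, Function.Bijective fun q => M.step q a

/-- Bireversibility: invertible, reversible, and the output automaton is reversible. -/
def IsBireversible (M : Mealy Q A) [Nonempty A] : Prop :=
  M.IsInvertible ∧ M.IsReversible ∧
    ∀ b, Function.Bijective fun q => M.step q (Function.invFun (M.out q) b)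

/-- The dual automaton: states and letters are exchanged. -/
def dual (M : Mealy Q A) : Mealy A Q where
  step a q := M.out q a
  out a q := M.step q a

/-- The enriched dual `(∂A)⁻ = ∂(A ⊔ A⁻¹)`: states are letters of `A`,
the alphabet is `Q ∪ Q⁻¹`. -/
noncomputable def edual (M : Mealy Q A) [Nonempty A] : Mealy A (Q × Bool) where
  step a qs :=
    match qs with
    | (q, true) => M.out q a
    | (q, false) => Function.invFun (M.out q) a
  out a qs :=
    match qs with
    | (q, true) => (M.step q a, true)
    | (q, false) => (M.step q (Function.invFun (M.out q) a), false)

/-- The disjoint union `A ⊔ A⁻¹` of an invertible automaton with its inverse: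
states are `Q ∪ Q⁻¹`. -/
noncomputable def withInv (M : Mealy Q A) [Nonempty A] : Mealy (Q × Bool) A where
  step qs a :=
    match qs with
    | (q, true) => (M.step q a, true)
    | (q, false) => (M.step q (Function.invFun (M.out q) a), false)
  out qs a :=
    match qs with
    | (q, true) => M.out q a
    | (q, false) => Function.invFun (M.out q) a

/-- The enrichment `A⁻` of a reversible transducer, over the doubled alphabet
`A ∪ A⁻¹`: to every transition `q →^{a|b} p` the inverse transition
`p →^{a⁻¹|b⁻¹} q` is added. -/
noncomputable def enrich (M : Mealy Q A) [Nonempty Q] : Mealy Q (A × Bool) where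
  step q as :=
    match as with
    | (a, true) => M.step q a
    | (a, false) => Function.invFun (fun p => M.step p a) q
  out q as :=
    match as with
    | (a, true) => (M.out q a, true)
    | (a, false) => (M.out (Function.invFun (fun p => M.step p a) q) a, false)

/-- The state reached from `q` after reading the word `w`. -/
def run (M : Mealy Q A) (q : Q) (w : List A) : Q := w.foldl M.step q

/-- Action of a state on right-infinite words over the alphabet. -/
def actOmega (M : Mealy Q A) (q : Q) (u : ℕ → A) : ℕ → A :=
  fun n => M.out (M.run q (List.ofFn fun i : Fin n => u i)) (u n)

/-- Action of a word of states on right-infinite words. -/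
def applyListOmega (M : Mealy Q A) (l : List Q) (u : ℕ → A) : ℕ → A :=
  l.foldl (fun v q => M.actOmega q v) u

/-- The orbit of a boundary point under the semigroup generated by the states. -/
def orbitOmega (M : Mealy Q A) (u : ℕ → A) : Set (ℕ → A) :=
  {z | ∃ l : List Q, z = M.applyListOmega l u}

/-- Action of a word of states on finite words over the alphabet. -/
def wact (M : Mealy Q A) : List Q → List A → List A
  | [], u => u
  | q :: w, u => act M q (wact M w u)

/-- State-word transition: the coupled action `w · u` of an input word `u` on a
word of states `w`. -/
def wstep (M : Mealy Q A) : List Q → List A → List Q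
  | [], _ => []
  | q :: w, u => M.run q (wact M w u) :: wstep M w u

end Mealy

/-- The length-`n` prefix of a right-infinite word. -/
def pre {α : Type*} (u : ℕ → α) (n : ℕ) : List α := List.ofFn fun i : Fin n => u i

/-- The periodic infinite word `w^ω`. -/
def periodicWord {α : Type*} [Inhabited α] (w : List α) : ℕ → α :=
  fun n => w.getD (n % w.length) default

/-!
Invertibility of `A` makes its enriched dual `∂A⁻` reversible: each letter `q^{±1}` permutes
the finite state set `A`. Reading one period `y` of `y^ω` therefore permutes `A`, so some power
`y^m` fixes every state. Hence every state of `∂A⁻` maps `y^ω` to a word of period `m|y|`, and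
acting by further states only multiplies the period again.
-/

open Function

theorem Function.Bijective.exists_iterate_eq_id {S : Type*} [Finite S] {f : S → S}
    (hf : Bijective f) : ∃ m, 0 < m ∧ f^[m] = id := by
  let σ : Equiv.Perm S := Equiv.ofBijective f hf
  refine ⟨orderOf σ, orderOf_pos σ, ?_⟩
  change (⇑σ)^[orderOf σ] = id
  rw [← Equiv.Perm.coe_pow, pow_orderOf_eq_one]
  rfl

section Prefix

variable {α : Type*}

theorem length_pre (u : ℕ → α) (n : ℕ) : (pre u n).length = n :=
  List.length_ofFn

theorem Function.Periodic.pre_add {u : ℕ → α} {p : ℕ} (hu : Periodic u p) (n : ℕ) :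
    pre u (p + n) = pre u p ++ pre u n := by
  rw [pre, List.ofFn_add]
  simp [pre, Nat.add_comm p, show ∀ x, u (x + p) = u x from hu]

theorem periodicWord_periodic [Inhabited α] (w : List α) :
    Periodic (periodicWord w) w.length := fun n => by
  simp [periodicWord]

theorem Function.Periodic.eq_periodicWord_pre [Inhabited α] {z : ℕ → α} {r : ℕ}
    (hz : Periodic z r) (hr : 0 < r) : z = periodicWord (pre z r) := by
  funext n
  have hn : n % r < (pre z r).length := (length_pre z r).symm ▸ Nat.mod_lt n hr
  rw [periodicWord, length_pre, List.getD_eq_getElem _ _ hn]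
  simp [pre, hz.map_mod_nat]

end Prefix

namespace Mealy

variable {Q A : Type*}

theorem run_append (M : Mealy Q A) (q : Q) (v w : List A) :
    M.run q (v ++ w) = M.run (M.run q v) w :=
  List.foldl_append ..

theorem run_pre_of_periodic (M : Mealy Q A) {u : ℕ → A} {p : ℕ} (hu : Periodic u p)
    (k n : ℕ) (q : Q) :
    M.run q (pre u (k * p + n)) = M.run ((fun s => M.run s (pre u p))^[k] q) (pre u n) := by
  induction k generalizing q with
  | zero => simp
  | succ k ih =>
    rw [show (k + 1) * p + n = p + (k * p + n) by ring, hu.pre_add, run_append, ih,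
      iterate_succ_apply]

theorem IsReversible.bijective_run {M : Mealy Q A} (hrev : M.IsReversible) (w : List A) :
    Bijective fun q => M.run q w := by
  induction w with
  | nil => exact bijective_id
  | cons a w ih => exact ih.comp (hrev a)

theorem IsReversible.actOmega_periodic [Finite Q] {M : Mealy Q A} (hrev : M.IsReversible)
    {u : ℕ → A} {p : ℕ} (hu : Periodic u p) (q : Q) :
    ∃ m, 0 < m ∧ Periodic (M.actOmega q u) (m * p) := by
  obtain ⟨m, hm, hid⟩ := (hrev.bijective_run (pre u p)).exists_iterate_eq_id
  refine ⟨m, hm, fun n => ?_⟩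
  change M.out (M.run q (pre u (n + m * p))) (u (n + m * p)) = M.out (M.run q (pre u n)) (u n)
  have hu' : u (n + m * p) = u n := by simpa using hu.nat_mul m n
  rw [hu', add_comm n, M.run_pre_of_periodic hu, hid, id]

theorem IsReversible.applyListOmega_periodic [Finite Q] {M : Mealy Q A}
    (hrev : M.IsReversible) (l : List Q) {u : ℕ → A} {p : ℕ} (hu : Periodic u p) :
    ∃ m, 0 < m ∧ Periodic (M.applyListOmega l u) (m * p) := by
  induction l generalizing u p with
  | nil => exact ⟨1, one_pos, by simpa [applyListOmega] using hu⟩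
  | cons q l ih =>
    obtain ⟨m, hm, hq⟩ := hrev.actOmega_periodic hu q
    obtain ⟨k, hk, hl⟩ := ih hq
    exact ⟨k * m, Nat.mul_pos hk hm, by rwa [mul_assoc]⟩

theorem IsInvertible.edual_isReversible [Nonempty A] {M : Mealy Q A}
    (hinv : M.IsInvertible) : M.edual.IsReversible := by
  rintro ⟨q, _ | _⟩
  · exact ⟨(rightInverse_invFun (hinv q).2).injective, invFun_surjective (hinv q).1⟩
  · exact hinv q

end Mealy

theorem orbit_of_periodic_finite_all_periodic_general {Q A : Type}
    [Fintype A] [Nonempty A] [Inhabited Q]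
    (M : Mealy Q A) (hinv : M.IsInvertible)
    (y : List (Q × Bool)) (hy : y ≠ []) :
    ∀ z ∈ M.edual.orbitOmega (periodicWord y),
      ∃ zw : List (Q × Bool), zw ≠ [] ∧ y.length ∣ zw.length ∧
        z = periodicWord zw := by
  rintro _ ⟨l, rfl⟩
  obtain ⟨m, hm, hper⟩ :=
    hinv.edual_isReversible.applyListOmega_periodic l (periodicWord_periodic y)
  have hr : 0 < m * y.length := Nat.mul_pos hm (List.length_pos_iff.mpr hy)
  refine ⟨pre _ (m * y.length), ?_, ?_, hper.eq_periodicWord_pre hr⟩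
  · exact List.ne_nil_of_length_pos (by rwa [length_pre])
  · rw [length_pre]
    exact dvd_mul_left _ _

/-- If the orbit of a periodic boundary point `y^ω ∈ (Q ∪ Q⁻¹)^ω` under the
semigroup generated by the enriched dual `∂A⁻` of an invertible Mealy automaton
is finite, then every point of this orbit is itself a periodic point `z^ω` with
`|z|` a (positive) multiple of `|y|`. -/
theorem orbit_of_periodic_finite_all_periodic {Q A : Type}
    [Fintype Q] [Fintype A] [Nonempty A] [Inhabited Q]
    (M : Mealy Q A) (hinv : M.IsInvertible)
    (y : List (Q × Bool)) (hy : y ≠ [])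
    (hfin : (M.edual.orbitOmega (periodicWord y)).Finite) :
    ∀ z ∈ M.edual.orbitOmega (periodicWord y),
      ∃ zw : List (Q × Bool), zw ≠ [] ∧ y.length ∣ zw.length ∧
        z = periodicWord zw :=
  orbit_of_periodic_finite_all_periodic_general M hinv y hy
end

section
/- Let A = (Q, A, ·, ∘) be a bireversible Mealy automaton. Then the group generated by the enriched automaton A^− (obtained by adding to each transition q →^{a|b} p the inverse transition p →^{a^{-1}|b^{-1}} q, acting on the tree over the doubled alphabet A ∪ A^{-1}) is isomorphic to 𝒢(A). -/
/-!
Relations are compared letter by letter through cross diagrams: a word `w` over `Q ∪ Q⁻¹`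
reading a letter outputs a letter and moves to a section word. On positive letters `A⁻` has
the cross diagrams of `A`, so relations of `A⁻` are relations of `A`. Conversely, reading
`a⁻¹` in `A⁻` runs the cross diagram of `A` at `a` backwards. Bireversibility makes
`w ↦ (section of w at a)` injective, hence a permutation of the finite set of relations of `A`
of a given length; so every relation `w` of `A` is the section at `a` of a relation `w'`, and
then `w` fixes `a⁻¹` with section `w'`. Thus the relations of `A` form a set closed under
sections whose elements fix every letter of `A ∪ A⁻¹`, and such words are relations of `A⁻`.
-/

namespace Mealy

open Function

section Cross

variable {S B : Type*} (N : Mealy S B)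

/-- The cross diagram of a word of states `w` and a letter `b`: the letter output by `w`
(whose last state reads `b` first) and the word of states reached. -/
def cross : List S → B → B × List S
  | [], b => (b, [])
  | s :: w, b => (N.out s (cross w b).1, N.step s (cross w b).1 :: (cross w b).2)

theorem wact_nil (w : List S) : N.wact w [] = [] := by
  induction w with
  | nil => rfl
  | cons s w ih => simp only [wact, ih, act]

theorem wact_cons (w : List S) (b : B) (v : List B) :
    N.wact w (b :: v) = (N.cross w b).1 :: N.wact (N.cross w b).2 v := by
  induction w with
  | nil => rfl
  | cons s w ih => simp only [wact, ih, act, cross]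

theorem length_cross_snd (w : List S) (b : B) : (N.cross w b).2.length = w.length := by
  induction w with
  | nil => rfl
  | cons s w ih => simp only [cross, List.length_cons, ih]

def IsRelation (w : List S) : Prop := ∀ v, N.wact w v = v

variable {N}

theorem IsRelation.cross {w : List S} (hw : N.IsRelation w) (b : B) :
    (N.cross w b).1 = b ∧ N.IsRelation (N.cross w b).2 := by
  have h : ∀ v, (N.cross w b).1 :: N.wact (N.cross w b).2 v = b :: v := fun v => by
    rw [← wact_cons]; exact hw (b :: v)
  exact ⟨(List.cons.inj (h [])).1, fun v => (List.cons.inj (h v)).2⟩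

theorem isRelation_of_cross_mem {R : Set (List S)}
    (hR : ∀ w ∈ R, ∀ b, (N.cross w b).1 = b ∧ (N.cross w b).2 ∈ R) {w : List S} (hw : w ∈ R) :
    N.IsRelation w := by
  intro v
  induction v generalizing w with
  | nil => exact wact_nil N w
  | cons b v ih => rw [wact_cons, (hR w hw b).1, ih (hR w hw b).2]

theorem IsReversible.cross_snd_injective (h : N.IsReversible) (b : B) :
    Injective fun w => (N.cross w b).2 := by
  intro w₁ w₂ hw
  induction w₁ generalizing w₂ with
  | nil => cases w₂ <;> simp_all [Mealy.cross]
  | cons s w₁ ih =>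
    cases w₂ with
    | nil => simp [Mealy.cross] at hw
    | cons t w₂ =>
      simp only [Mealy.cross, List.cons.injEq] at hw
      obtain rfl := ih hw.2
      rw [(h _).1 hw.1]

/-- Taking sections at `b` injectively maps the finite set of relations of a given length
into itself, hence onto it. -/
theorem IsReversible.exists_isRelation_cross_snd_eq [Finite S] (h : N.IsReversible)
    {w : List S} (hw : N.IsRelation w) (b : B) :
    ∃ w', N.IsRelation w' ∧ (N.cross w' b).2 = w := by
  let R := {u : List S | N.IsRelation u ∧ u.length = w.length}
  have hfin : R.Finite := (List.finite_length_eq S w.length).subset fun u hu => hu.2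
  have hmaps : Set.MapsTo (fun u => (N.cross u b).2) R R := fun u hu =>
    ⟨(hu.1.cross b).2, by rw [length_cross_snd, hu.2]⟩
  obtain ⟨w', hw', rfl⟩ :=
    ((hfin.injOn_iff_bijOn_of_mapsTo hmaps).mp (h.cross_snd_injective b).injOn).surjOn ⟨hw, rfl⟩
  exact ⟨w', hw'.1, rfl⟩

end Cross

section Inverse

variable {Q A : Type*}

section WithInv

variable [Nonempty A] (M : Mealy Q A)

@[simp] theorem withInv_step_true (q : Q) (a : A) :
    M.withInv.step (q, true) a = (M.step q a, true) := rfl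

@[simp] theorem withInv_step_false (q : Q) (a : A) :
    M.withInv.step (q, false) a = (M.step q (invFun (M.out q) a), false) := rfl

@[simp] theorem withInv_out_true (q : Q) (a : A) : M.withInv.out (q, true) a = M.out q a := rfl

@[simp] theorem withInv_out_false (q : Q) (a : A) :
    M.withInv.out (q, false) a = invFun (M.out q) a := rfl

theorem act_withInv_true (q : Q) (v : List A) : M.withInv.act (q, true) v = M.act q v := by
  induction v generalizing q with
  | nil => rfl
  | cons a v ih => simp only [act, withInv_out_true, withInv_step_true, ih]

theorem act_withInv_false (q : Q) (v : List A) : M.withInv.act (q, false) v = M.actInv q v := by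
  induction v generalizing q with
  | nil => rfl
  | cons a v ih => simp only [act, actInv, withInv_out_false, withInv_step_false, ih]

theorem evalW_eq_wact_withInv (w : List (Q × Bool)) (v : List A) :
    M.evalW w v = M.withInv.wact w v := by
  induction w with
  | nil => rfl
  | cons x w ih =>
    obtain ⟨q, _ | _⟩ := x
    · simp only [evalW, wact, ih, act_withInv_false]
    · simp only [evalW, wact, ih, act_withInv_true]

end WithInv

section Enrich

variable [Nonempty Q] (M : Mealy Q A)

@[simp] theorem enrich_step_true (q : Q) (a : A) : M.enrich.step q (a, true) = M.step q a := rfl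

@[simp] theorem enrich_step_false (q : Q) (a : A) :
    M.enrich.step q (a, false) = invFun (fun p => M.step p a) q := rfl

@[simp] theorem enrich_out_true (q : Q) (a : A) :
    M.enrich.out q (a, true) = (M.out q a, true) := rfl

@[simp] theorem enrich_out_false (q : Q) (a : A) :
    M.enrich.out q (a, false) = (M.out (invFun (fun p => M.step p a) q) a, false) := rfl

variable {M}

theorem IsReversible.step_invFun (h : M.IsReversible) (a : A) (q : Q) :
    M.step (invFun (fun p => M.step p a) q) a = q :=
  invFun_eq ((h a).2 q)

theorem IsReversible.invFun_step (h : M.IsReversible) (a : A) (q : Q) :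
    invFun (fun p => M.step p a) (M.step q a) = q :=
  leftInverse_invFun (h a).1 q

end Enrich

section Bireversible

variable [Nonempty A] {M : Mealy Q A}

theorem IsInvertible.out_invFun (h : M.IsInvertible) (q : Q) (b : A) :
    M.out q (invFun (M.out q) b) = b :=
  invFun_eq ((h q).2 b)

theorem IsBireversible.isReversible_withInv (hbi : M.IsBireversible) : M.withInv.IsReversible := by
  obtain ⟨-, hrev, hout⟩ := hbi
  refine fun a => ⟨?_, ?_⟩
  · rintro ⟨p, _ | _⟩ ⟨q, _ | _⟩ h <;>
      simp only [withInv_step_true, withInv_step_false, Prod.mk.injEq, Bool.false_eq_true,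
        Bool.true_eq_false, and_false, and_true] at h ⊢
    · exact (hout a).1 h
    · exact (hrev a).1 h
  · rintro ⟨q, _ | _⟩
    · obtain ⟨p, rfl⟩ := (hout a).2 q
      exact ⟨(p, false), rfl⟩
    · obtain ⟨p, rfl⟩ := (hrev a).2 q
      exact ⟨(p, true), rfl⟩

variable [Nonempty Q]

theorem IsBireversible.enrich_out_injective (hbi : M.IsBireversible) (q : Q) :
    Injective (M.enrich.out q) := by
  obtain ⟨hinv, hrev, hout⟩ := hbi
  rintro ⟨x, _ | _⟩ ⟨y, _ | _⟩ h <;>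
    simp only [enrich_out_true, enrich_out_false, Prod.mk.injEq, Bool.false_eq_true,
      Bool.true_eq_false, and_false, and_true] at h ⊢
  · have hx := hrev.step_invFun x q
    have hy := hrev.step_invFun y q
    generalize invFun (fun p => M.step p x) q = rx at h hx
    generalize invFun (fun p => M.step p y) q = ry at h hy
    -- `rx` and `ry` are both sent to `q` by the letter `M.out rx x` of the output automaton
    have hr : rx = ry := (hout (M.out rx x)).1 <|
      show M.step rx (invFun (M.out rx) (M.out rx x)) = M.step ry (invFun (M.out ry) (M.out rx x)) by
        rw [leftInverse_invFun (hinv rx).1, h, leftInverse_invFun (hinv ry).1, hx, hy]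
    subst hr
    exact (hinv rx).1 h
  · exact (hinv q).1 h

theorem IsBireversible.invFun_enrich_out_true (hbi : M.IsBireversible) (q : Q) (b : A) :
    invFun (M.enrich.out q) (b, true) = (invFun (M.out q) b, true) := by
  have h : M.enrich.out q (invFun (M.out q) b, true) = (b, true) := by
    rw [enrich_out_true, hbi.1.out_invFun]
  exact h ▸ leftInverse_invFun (hbi.enrich_out_injective q) _

theorem IsBireversible.invFun_enrich_out_false (hbi : M.IsBireversible) (q : Q) (b : A) :
    invFun (M.enrich.out (M.step q (invFun (M.out q) b))) (b, false)
      = (invFun (M.out q) b, false) := by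
  have h : M.enrich.out (M.step q (invFun (M.out q) b)) (invFun (M.out q) b, false) = (b, false) := by
    rw [enrich_out_false, hbi.2.1.invFun_step, hbi.1.out_invFun]
  exact h ▸ leftInverse_invFun (hbi.enrich_out_injective _) _

theorem IsBireversible.cross_enrich_withInv_true (hbi : M.IsBireversible)
    (w : List (Q × Bool)) (a : A) :
    M.enrich.withInv.cross w (a, true) =
      (((M.withInv.cross w a).1, true), (M.withInv.cross w a).2) := by
  induction w with
  | nil => rfl
  | cons x w ih =>
    obtain ⟨q, _ | _⟩ := x <;>
      simp only [cross, ih, withInv_out_true, withInv_out_false, withInv_step_true,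
        withInv_step_false, enrich_out_true, enrich_step_true, hbi.invFun_enrich_out_true]

theorem IsBireversible.cross_enrich_withInv_false (hbi : M.IsBireversible)
    (w : List (Q × Bool)) (a : A) :
    M.enrich.withInv.cross (M.withInv.cross w a).2 (a, false) =
      (((M.withInv.cross w a).1, false), w) := by
  induction w with
  | nil => rfl
  | cons x w ih =>
    obtain ⟨q, _ | _⟩ := x <;>
      simp only [cross, ih, withInv_out_true, withInv_out_false, withInv_step_true,
        withInv_step_false, enrich_out_false, enrich_step_false, hbi.invFun_enrich_out_false,
        hbi.2.1.invFun_step]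

theorem IsBireversible.wact_enrich_withInv_map_true (hbi : M.IsBireversible)
    (w : List (Q × Bool)) (v : List A) :
    M.enrich.withInv.wact w (v.map (·, true)) = (M.withInv.wact w v).map (·, true) := by
  induction v generalizing w with
  | nil => simp only [List.map_nil, wact_nil]
  | cons a v ih => simp only [List.map_cons, wact_cons, hbi.cross_enrich_withInv_true, ih]

theorem IsBireversible.cross_enrich_withInv_of_isRelation [Finite Q] (hbi : M.IsBireversible)
    {w : List (Q × Bool)} (hw : M.withInv.IsRelation w) (x : A × Bool) :
    (M.enrich.withInv.cross w x).1 = x ∧ M.withInv.IsRelation (M.enrich.withInv.cross w x).2 := by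
  obtain ⟨a, _ | _⟩ := x
  · obtain ⟨w', hw', rfl⟩ := hbi.isReversible_withInv.exists_isRelation_cross_snd_eq hw a
    rw [hbi.cross_enrich_withInv_false, (hw'.cross a).1]
    exact ⟨rfl, hw'⟩
  · rw [hbi.cross_enrich_withInv_true, (hw.cross a).1]
    exact ⟨rfl, (hw.cross a).2⟩

theorem IsBireversible.isRelation_enrich_withInv_iff [Finite Q] (hbi : M.IsBireversible)
    (w : List (Q × Bool)) : M.enrich.withInv.IsRelation w ↔ M.withInv.IsRelation w := by
  refine ⟨fun h v => ?_, isRelation_of_cross_mem fun _ => hbi.cross_enrich_withInv_of_isRelation⟩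
  have hv := hbi.wact_enrich_withInv_map_true w v
  rw [h] at hv
  exact List.map_injective_iff.mpr (fun a b hab => (Prod.mk.inj hab).1) hv.symm

end Bireversible

end Inverse

end Mealy

theorem enrich_relations_eq_relations_general {Q A : Type}
    [Fintype Q] [Nonempty A] [Nonempty Q]
    (M : Mealy Q A) (hbi : M.IsBireversible) :
    ∀ w : List (Q × Bool),
      (∀ v : List (A × Bool), M.enrich.evalW w v = v) ↔
      (∀ v : List A, M.evalW w v = v) := by
  intro w
  simp only [Mealy.evalW_eq_wact_withInv]
  exact hbi.isRelation_enrich_withInv_iff w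

/-- For a bireversible Mealy automaton `A`, the canonical epimorphism
`𝒢(A⁻) → 𝒢(A)` is an isomorphism: a word over `Q ∪ Q⁻¹` is a relation of the
enriched automaton `A⁻` (acting on the tree over the doubled alphabet `A ∪ A⁻¹`)
if and only if it is a relation of `A` (acting on the tree over `A`). -/
theorem enrich_relations_eq_relations {Q A : Type}
    [Fintype Q] [Fintype A] [Nonempty A] [Nonempty Q]
    (M : Mealy Q A) (hbi : M.IsBireversible) :
    ∀ w : List (Q × Bool),
      (∀ v : List (A × Bool), M.enrich.evalW w v = v) ↔
      (∀ v : List A, M.evalW w v = v) :=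
  enrich_relations_eq_relations_general M hbi
end

section
/- Let A be a bireversible Mealy automaton on states Q and G = 𝒢(∂A^−) the group generated by its enriched dual, acting on (Q ∪ Q^{-1})^ω. For every essentially trivial point v ∈ (Q ∪ Q^{-1})^ω, the Schreier graph of the stabilizer St_G(v) with respect to the generating set is finite; equivalently, St_G(v) has finite index in G. -/
/-- `u` is essentially trivial: the free reductions of its prefixes have uniformly
bounded length. -/
def EssentiallyTrivial {Q : Type*} [DecidableEq Q] (u : ℕ → Q × Bool) : Prop :=
  ∃ m : ℕ, ∀ n, (FreeGroup.reduce (pre u n)).length ≤ m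

/-!
In the union `N` of the enriched dual `∂A⁻` with its inverse, reading a cancelling pair
`q^b q^{-b}` from any state writes a cancelling pair and returns to the same state; this is
where bireversibility enters. Hence the letter that an element of the semigroup generated
by the states of `N` writes at position `n` of `v` depends only on `vₙ` and on the free
reduction of the prefix `v₀ ⋯ vₙ₋₁`. As `v` is essentially trivial, these reductions range
over a finite set, so the orbit of `v` embeds into a finite set of functions.
-/

theorem pre_succ {α : Type*} (u : ℕ → α) (n : ℕ) : pre u (n + 1) = pre u n ++ [u n] := by
  rw [pre, List.ofFn_succ', List.concat_eq_append]
  rfl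

namespace Mealy

variable {S Γ : Type*}

theorem run_append_s14 (N : Mealy S Γ) (s : S) (u w : List Γ) :
    N.run s (u ++ w) = N.run (N.run s u) w :=
  List.foldl_append ..

theorem act_append (N : Mealy S Γ) (s : S) (u w : List Γ) :
    N.act s (u ++ w) = N.act s u ++ N.act (N.run s u) w := by
  induction u generalizing s with
  | nil => rfl
  | cons a u ih => simp only [List.cons_append, act, ih]; rfl

theorem pre_actOmega (N : Mealy S Γ) (s : S) (u : ℕ → Γ) (n : ℕ) :
    pre (N.actOmega s u) n = N.act s (pre u n) := by
  induction n with
  | zero => rfl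
  | succ n ih => rw [pre_succ, pre_succ, act_append, ih]; rfl

/-- `N.outLetter l w x` is the letter written at the position of `x` when the states of `l`
act, first to last, on `w ++ [x]`. -/
def outLetter (N : Mealy S Γ) : List S → List Γ → Γ → Γ
  | [], _, x => x
  | s :: l, w, x => N.outLetter l (N.act s w) (N.out (N.run s w) x)

theorem applyListOmega_apply (N : Mealy S Γ) (l : List S) (u : ℕ → Γ) (n : ℕ) :
    N.applyListOmega l u n = N.outLetter l (pre u n) (u n) := by
  induction l generalizing u with
  | nil => rfl
  | cons s l ih =>
    rw [applyListOmega, List.foldl_cons, ← applyListOmega, ih, outLetter, pre_actOmega]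
    rfl

/-- The alphabet `α × Bool` is read as `α ∪ α⁻¹`, so `(q, b) (q, !b)` is a cancelling pair. -/
def IsPairTransparent {α : Type*} (N : Mealy S (α × Bool)) : Prop :=
  ∀ (s : S) (q : α) (b : Bool), ∃ p, N.out s (q, b) = (p, b) ∧
    N.out (N.step s (q, b)) (q, !b) = (p, !b) ∧ N.step (N.step s (q, b)) (q, !b) = s

namespace IsPairTransparent

variable {α : Type*} {N : Mealy S (α × Bool)}

theorem outLetter_cancel (hN : N.IsPairTransparent) (l : List S)
    (w₁ w₂ : List (α × Bool)) (q : α) (b : Bool) (x : α × Bool) :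
    N.outLetter l (w₁ ++ (q, b) :: (q, !b) :: w₂) x = N.outLetter l (w₁ ++ w₂) x := by
  induction l generalizing w₁ w₂ q x with
  | nil => rfl
  | cons s l ih =>
    obtain ⟨p, hout, hout', hstep⟩ := hN (N.run s w₁) q b
    have hrun : N.run s (w₁ ++ (q, b) :: (q, !b) :: w₂) = N.run s (w₁ ++ w₂) := by
      rw [run_append_s14, run_append_s14]
      exact congrArg (N.run · w₂) hstep
    have hact : N.act s (w₁ ++ (q, b) :: (q, !b) :: w₂) =
        N.act s w₁ ++ (p, b) :: (p, !b) :: N.act (N.run s w₁) w₂ := by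
      rw [act_append, act, act, hout, hout', hstep]
    rw [outLetter, outLetter, hrun, hact, act_append, ih]

theorem outLetter_eq_of_red (hN : N.IsPairTransparent) (l : List S)
    {w w' : List (α × Bool)} (h : FreeGroup.Red w w') (x : α × Bool) :
    N.outLetter l w x = N.outLetter l w' x := by
  induction h with
  | refl => rfl
  | tail _ hstep ih =>
    obtain ⟨⟩ := hstep
    exact ih.trans (hN.outLetter_cancel l _ _ _ _ x)

theorem orbitOmega_finite [Finite α] [DecidableEq α] (hN : N.IsPairTransparent)
    {u : ℕ → α × Bool} (hu : EssentiallyTrivial u) : (N.orbitOmega u).Finite := by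
  obtain ⟨m, hm⟩ := hu
  have : Finite {r : List (α × Bool) // r.length ≤ m} :=
    (List.finite_length_le (α × Bool) m).to_subtype
  refine (Set.finite_range fun g : {r : List (α × Bool) // r.length ≤ m} × (α × Bool) →
    α × Bool => fun n => g (⟨FreeGroup.reduce (pre u n), hm n⟩, u n)).subset ?_
  rintro _ ⟨l, rfl⟩
  refine ⟨fun p => N.outLetter l p.1 p.2, funext fun n => ?_⟩
  rw [applyListOmega_apply, hN.outLetter_eq_of_red l FreeGroup.reduce.red]

theorem withInv [Nonempty α] (hN : N.IsPairTransparent)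
    (hbij : ∀ s, Function.Bijective (N.out s)) : N.withInv.IsPairTransparent := by
  rintro ⟨s, _ | _⟩ q b
  · obtain ⟨⟨q₀, b₀⟩, hq₀⟩ := (hbij s).2 (q, b)
    obtain ⟨p, hout, hout', hstep⟩ := hN s q₀ b₀
    obtain ⟨rfl, rfl⟩ := Prod.ext_iff.1 (hout.symm.trans hq₀)
    have hinv : Function.invFun (N.out s) (p, b₀) = (q₀, b₀) := by
      rw [← hout, Function.leftInverse_invFun (hbij s).1]
    have hinv' : Function.invFun (N.out (N.step s (q₀, b₀))) (p, !b₀) = (q₀, !b₀) := by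
      rw [← hout', Function.leftInverse_invFun (hbij _).1]
    exact ⟨q₀, hinv, by simp only [Mealy.withInv, hinv, hinv'],
      by simp only [Mealy.withInv, hinv, hinv', hstep]⟩
  · obtain ⟨p, hout, hout', hstep⟩ := hN s q b
    exact ⟨p, hout, hout', congrArg (·, true) hstep⟩

end IsPairTransparent

section Bireversible

variable {Q A : Type*} [Nonempty A] {M : Mealy Q A}

theorem isPairTransparent_edual (hM : M.IsInvertible) : M.edual.IsPairTransparent := by
  rintro a q (_ | _)
  · exact ⟨M.step q (Function.invFun (M.out q) a), rfl, rfl,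
      Function.rightInverse_invFun (hM q).2 a⟩
  · have hinv : Function.invFun (M.out q) (M.out q a) = a :=
      Function.leftInverse_invFun (hM q).1 a
    exact ⟨M.step q a, rfl, by simp only [edual, hinv, Bool.not_true], hinv⟩

theorem edual_out_bijective (hM : M.IsBireversible) (a : A) :
    Function.Bijective (M.edual.out a) := by
  obtain ⟨-, hrev, hrev'⟩ := hM
  constructor
  · rintro ⟨q, _ | _⟩ ⟨q', _ | _⟩ h <;>
      simp only [edual, Prod.mk.injEq, reduceCtorEq, and_true, and_false] at h ⊢
    · exact (hrev' a).1 h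
    · exact (hrev a).1 h
  · rintro ⟨p, _ | _⟩
    · obtain ⟨q, hq⟩ := (hrev' a).2 p
      exact ⟨(q, false), by simp only [edual, hq]⟩
    · obtain ⟨q, hq⟩ := (hrev a).2 p
      exact ⟨(q, true), by simp only [edual, hq]⟩

end Bireversible

end Mealy

theorem finite_schreier_graph_of_essentially_trivial_general {Q A : Type}
    [Fintype Q] [Nonempty A] [Nonempty Q] [DecidableEq Q]
    (M : Mealy Q A) (hbi : M.IsBireversible)
    (v : ℕ → Q × Bool) (hv : EssentiallyTrivial v) :
    ((M.edual.withInv).orbitOmega v).Finite :=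
  ((Mealy.isPairTransparent_edual hbi.1).withInv
    (Mealy.edual_out_bijective hbi)).orbitOmega_finite hv

/-- For a bireversible Mealy automaton `A`, the Schreier graph (orbit) of every
essentially trivial point `v ∈ (Q ∪ Q⁻¹)^ω` under the group generated by the
enriched dual `∂A⁻` (acting together with the formal inverses of its states) is
finite; equivalently, the stabilizer of `v` has finite index. -/
theorem finite_schreier_graph_of_essentially_trivial {Q A : Type}
    [Fintype Q] [Fintype A] [Nonempty A] [Nonempty Q] [DecidableEq Q]
    (M : Mealy Q A) (hbi : M.IsBireversible)
    (v : ℕ → Q × Bool) (hv : EssentiallyTrivial v) :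
    ((M.edual.withInv).orbitOmega v).Finite :=
  finite_schreier_graph_of_essentially_trivial_general M hbi v hv
end
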